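/- Let H ≥ 0 be a self-adjoint operator, ρ a density operator, ε ≥ 0, and suppose z ≥ 0, y ∈ ℝ, and M is an operator with M†M ≤ I such that (z/2)(M + M†) − y·I ≤ H. Then for every density operator σ with (1/2)‖σ − ρ‖₁ ≤ ε, one has tr(σH) ≥ tr(ρ[(z/2)(M + M†) − y·I]) − 2zε. In particular the dual SDP value lower-bounds the minimum energy E_{min,ε}(ρ) := inf{tr(σH) : (1/2)‖σ−ρ‖₁ ≤ ε}. -/

import Mathlib

/-! Write σ − ρ = P − N with P, N ≥ 0 its positive and negative parts, so that
‖σ − ρ‖₁ = tr P + tr N. A contraction satisfies −2 ≤ M + M† ≤ 2, hence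
tr(P·(z/2)(M + M†)) ≥ −z·tr P and tr(N·(z/2)(M + M†)) ≤ z·tr N, which bounds
tr((σ − ρ)·(z/2)(M + M†)) below by −z‖σ − ρ‖₁ ≥ −2zε. Since tr σ = tr ρ the y·I term
cancels, and tr(σH) ≥ tr(σ[(z/2)(M + M†) − y·I]) because σ ≥ 0. The infimum bound follows
as ρ itself is feasible. -/

open Matrix
open scoped ComplexOrder
noncomputable section

def traceNorm {d : ℕ} (A : Matrix (Fin d) (Fin d) ℂ) : ℝ :=
  (((Matrix.posSemidef_conjTranspose_mul_self A).1.eigenvectorUnitary.1 *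
      diagonal ((fun r : ℝ => (r : ℂ)) ∘ Real.sqrt ∘ (Matrix.posSemidef_conjTranspose_mul_self A).1.eigenvalues) *
      (star (Matrix.posSemidef_conjTranspose_mul_self A).1.eigenvectorUnitary :
        Matrix (Fin d) (Fin d) ℂ)).trace).re

def IsDensity {d : ℕ} (ρ : Matrix (Fin d) (Fin d) ℂ) : Prop := ρ.PosSemidef ∧ ρ.trace = 1

open scoped MatrixOrder

namespace Matrix

variable {n 𝕜 : Type*} [Fintype n] [RCLike 𝕜]

theorem PosSemidef.trace_mul_nonneg {A B : Matrix n n 𝕜} (hA : A.PosSemidef)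
    (hB : B.PosSemidef) : 0 ≤ (A * B).trace := by
  classical
  obtain ⟨C, rfl⟩ := CStarAlgebra.nonneg_iff_eq_star_mul_self.mp hA.nonneg
  rw [mul_assoc, trace_mul_comm, mul_assoc, star_eq_conjTranspose, ← mul_assoc]
  exact (hB.mul_mul_conjTranspose_same C).trace_nonneg

variable [DecidableEq n]

theorem posSemidef_two_add_add_conjTranspose {M : Matrix n n 𝕜}
    (hM : (1 - Mᴴ * M).PosSemidef) : ((2 : 𝕜) • 1 + (M + Mᴴ)).PosSemidef := by
  convert (posSemidef_conjTranspose_mul_self (1 + M)).add hM using 1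
  simp only [conjTranspose_add, conjTranspose_one, add_mul, mul_add, one_mul, mul_one]
  module

theorem posSemidef_two_sub_add_conjTranspose {M : Matrix n n 𝕜}
    (hM : (1 - Mᴴ * M).PosSemidef) : ((2 : 𝕜) • 1 - (M + Mᴴ)).PosSemidef := by
  have h := posSemidef_two_add_add_conjTranspose (M := -M) (by simpa using hM)
  rwa [conjTranspose_neg, ← neg_add, ← sub_eq_add_neg] at h

theorem IsHermitian.neg_mul_re_trace_abs_le_re_trace_mul {X B : Matrix n n 𝕜}
    (hX : X.IsHermitian) {c : ℝ} (hB₁ : ((c : 𝕜) • 1 + B).PosSemidef)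
    (hB₂ : ((c : 𝕜) • 1 - B).PosSemidef) :
    -(c * RCLike.re (CFC.abs X).trace) ≤ RCLike.re (X * B).trace := by
  have hpos := RCLike.nonneg_iff.mp
    ((CFC.posPart_nonneg X).posSemidef.trace_mul_nonneg hB₁) |>.1
  have hneg := RCLike.nonneg_iff.mp
    ((CFC.negPart_nonneg X).posSemidef.trace_mul_nonneg hB₂) |>.1
  have hXB : X * B = X⁺ * B - X⁻ * B := by rw [← sub_mul, CFC.posPart_sub_negPart X hX]
  rw [← CFC.posPart_add_negPart X hX, hXB]
  simp only [mul_add, mul_sub, Matrix.mul_smul, mul_one, trace_add, trace_sub, trace_smul,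
    map_add, map_sub, smul_eq_mul, RCLike.re_ofReal_mul] at hpos hneg ⊢
  linarith

theorem IsHermitian.neg_mul_re_trace_abs_le_re_trace_mul_of_contraction {X M : Matrix n n 𝕜}
    (hX : X.IsHermitian) (hM : (1 - Mᴴ * M).PosSemidef) {c : ℝ} (hc : 0 ≤ c) :
    -(c * RCLike.re (CFC.abs X).trace) ≤ RCLike.re (X * (((c : 𝕜) / 2) • (M + Mᴴ))).trace := by
  have hhalf : (0 : 𝕜) ≤ (c : 𝕜) / 2 := by positivity
  refine hX.neg_mul_re_trace_abs_le_re_trace_mul ?_ ?_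
  · rw [show (c : 𝕜) • 1 + ((c : 𝕜) / 2) • (M + Mᴴ) = ((c : 𝕜) / 2) • ((2 : 𝕜) • 1 + (M + Mᴴ))
      by module]
    exact (posSemidef_two_add_add_conjTranspose hM).smul hhalf
  · rw [show (c : 𝕜) • 1 - ((c : 𝕜) / 2) • (M + Mᴴ) = ((c : 𝕜) / 2) • ((2 : 𝕜) • 1 - (M + Mᴴ))
      by module]
    exact (posSemidef_two_sub_add_conjTranspose hM).smul hhalf

end Matrix

theorem traceNorm_eq_re_trace_abs {d : ℕ} (A : Matrix (Fin d) (Fin d) ℂ) :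
    traceNorm A = (CFC.abs A).trace.re := by
  have hA := posSemidef_conjTranspose_mul_self A
  rw [CFC.abs, star_eq_conjTranspose, CFC.sqrt_eq_real_sqrt _ hA.nonneg, cfcₙ_eq_cfc,
    hA.1.cfc_eq]
  rfl

theorem min_energy_sdp_weak_duality_general {d : ℕ}
    (H ρ M : Matrix (Fin d) (Fin d) ℂ) (z y ε : ℝ)
    (hρ : IsDensity ρ) (hε : 0 ≤ ε) (hz : 0 ≤ z)
    (hM : ((1 : Matrix (Fin d) (Fin d) ℂ) - Mᴴ * M).PosSemidef)
    (hdualfeas : (H - (((z : ℂ) / 2) • (M + Mᴴ) - (y : ℂ) • 1)).PosSemidef) :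
    (∀ σ : Matrix (Fin d) (Fin d) ℂ, IsDensity σ → (1 / 2) * traceNorm (σ - ρ) ≤ ε →
      ((σ * H).trace).re ≥
        ((ρ * (((z : ℂ) / 2) • (M + Mᴴ) - (y : ℂ) • 1)).trace).re - 2 * z * ε) ∧
    ((ρ * (((z : ℂ) / 2) • (M + Mᴴ) - (y : ℂ) • 1)).trace).re - 2 * z * ε ≤
      sInf {x : ℝ | ∃ σ : Matrix (Fin d) (Fin d) ℂ,
        IsDensity σ ∧ (1 / 2) * traceNorm (σ - ρ) ≤ ε ∧ x = ((σ * H).trace).re} := by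
  have bound : ∀ σ : Matrix (Fin d) (Fin d) ℂ, IsDensity σ → (1 / 2) * traceNorm (σ - ρ) ≤ ε →
      ((σ * H).trace).re ≥
        ((ρ * (((z : ℂ) / 2) • (M + Mᴴ) - (y : ℂ) • 1)).trace).re - 2 * z * ε := by
    intro σ hσ hdist
    have hfeas := (Complex.nonneg_iff.mp (hσ.1.trace_mul_nonneg hdualfeas)).1
    have hkey : -(z * traceNorm (σ - ρ)) ≤ (((σ - ρ) * (((z : ℂ) / 2) • (M + Mᴴ))).trace).re := by
      rw [traceNorm_eq_re_trace_abs]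
      exact (hσ.1.1.sub hρ.1.1).neg_mul_re_trace_abs_le_re_trace_mul_of_contraction hM hz
    simp only [mul_sub, sub_mul, Matrix.mul_smul, mul_one, trace_sub, trace_smul, smul_eq_mul,
      hσ.2, hρ.2, Complex.sub_re] at hfeas hkey ⊢
    linarith [mul_le_mul_of_nonneg_left hdist hz]
  refine ⟨bound, le_csInf ⟨_, ρ, hρ, ?_, rfl⟩ ?_⟩
  · simpa [traceNorm_eq_re_trace_abs] using hε
  · rintro _ ⟨σ, hσ, hdist, rfl⟩
    exact bound σ hσ hdist

theorem min_energy_sdp_weak_duality {d : ℕ}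
    (H ρ M : Matrix (Fin d) (Fin d) ℂ) (z y ε : ℝ)
    (hH : H.PosSemidef) (hρ : IsDensity ρ) (hε : 0 ≤ ε) (hz : 0 ≤ z)
    (hM : ((1 : Matrix (Fin d) (Fin d) ℂ) - Mᴴ * M).PosSemidef)
    (hdualfeas : (H - (((z : ℂ) / 2) • (M + Mᴴ) - (y : ℂ) • 1)).PosSemidef) :
    (∀ σ : Matrix (Fin d) (Fin d) ℂ, IsDensity σ → (1 / 2) * traceNorm (σ - ρ) ≤ ε →
      ((σ * H).trace).re ≥
        ((ρ * (((z : ℂ) / 2) • (M + Mᴴ) - (y : ℂ) • 1)).trace).re - 2 * z * ε) ∧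
    ((ρ * (((z : ℂ) / 2) • (M + Mᴴ) - (y : ℂ) • 1)).trace).re - 2 * z * ε ≤
      sInf {x : ℝ | ∃ σ : Matrix (Fin d) (Fin d) ℂ,
        IsDensity σ ∧ (1 / 2) * traceNorm (σ - ρ) ≤ ε ∧ x = ((σ * H).trace).re} :=
  min_energy_sdp_weak_duality_general H ρ M z y ε hρ hε hz hM hdualfeas
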